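/- For an integer q ≥ 1 define G_q(t) = ∫_{−1}^{1} e^{tu} (1 − u²)^{(q−2)/2} du. Then for any t₁ > 0 and t₂ > 0, G_q(t₂)/G_q(t₁) ≤ exp(|t₁² − t₂²|/(2q)). -/

import Mathlib

/-!
Differentiating under the integral sign, then integrating by parts with
`e^{tu} (1 - u²)^{q/2}`, which vanishes at `±1`, gives
`G_q'(t) = (t / q) ∫_{-1}^{1} e^{tu} (1 - u²)^{q/2} du`. Since `0 ≤ 1 - u² ≤ 1`, this lies between
`0` and `(t / q) G_q(t)` for `t > 0`. So `G_q` is nondecreasing on `(0, ∞)`, which settles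
`t₂ ≤ t₁`, and `G_q(t) e^{-t²/(2q)}` is nonincreasing there, which settles `t₁ ≤ t₂`.
-/

open MeasureTheory Real

noncomputable section

/-- `G_q(t) = ∫_{−1}^{1} e^{tu} (1 − u²)^{(q−2)/2} du`. -/
def Gq (q : ℕ) (t : ℝ) : ℝ :=
  ∫ u in Set.Icc (-1 : ℝ) 1, Real.exp (t * u) * (1 - u ^ 2) ^ (((q : ℝ) - 2) / 2)

open Set

section Gronwall

variable {f f' : ℝ → ℝ} {c : ℝ}

lemma le_mul_exp_of_hasDerivAt_le_mul {a b : ℝ} (hab : a ≤ b)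
    (hf : ∀ t ∈ Icc a b, HasDerivAt f (f' t) t) (hf' : ∀ t ∈ Ioo a b, f' t ≤ t / c * f t) :
    f b ≤ f a * exp ((b ^ 2 - a ^ 2) / (2 * c)) := by
  set g : ℝ → ℝ := fun t => exp (-t ^ 2 / (2 * c))
  have hg : ∀ t, HasDerivAt g (g t * (-(2 * t) / (2 * c))) t := fun t => by
    have : HasDerivAt (fun t : ℝ => -t ^ 2 / (2 * c)) (-(2 * t) / (2 * c)) t := by
      simpa using (hasDerivAt_pow 2 t).neg.div_const (2 * c)
    exact this.exp
  have hfg : ∀ t ∈ Icc a b,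
      HasDerivAt (f * g) (f' t * g t + f t * (g t * (-(2 * t) / (2 * c)))) t :=
    fun t ht => (hf t ht).mul (hg t)
  have anti : AntitoneOn (f * g) (Icc a b) := by
    refine antitoneOn_of_hasDerivWithinAt_nonpos (convex_Icc a b)
      (fun t ht => (hfg t ht).continuousAt.continuousWithinAt)
      (fun t ht => (hfg t (interior_subset ht)).hasDerivWithinAt) fun t ht => ?_
    rw [interior_Icc] at ht
    rw [show f' t * g t + f t * (g t * (-(2 * t) / (2 * c))) = (f' t - t / c * f t) * g t by ring]
    exact mul_nonpos_of_nonpos_of_nonneg (sub_nonpos.2 (hf' t ht)) (exp_pos _).le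
  calc f b = (f * g) b * exp (b ^ 2 / (2 * c)) := by
        simp only [Pi.mul_apply, g, mul_assoc, ← exp_add, neg_div, neg_add_cancel, exp_zero,
          mul_one]
    _ ≤ (f * g) a * exp (b ^ 2 / (2 * c)) := by
        gcongr
        exact anti (left_mem_Icc.2 hab) (right_mem_Icc.2 hab) hab
    _ = f a * exp ((b ^ 2 - a ^ 2) / (2 * c)) := by
        simp only [Pi.mul_apply, g, mul_assoc, ← exp_add]; ring_nf

lemma div_le_exp_abs_sq_sub_of_hasDerivAt (hc : 0 ≤ c) {t₁ t₂ : ℝ} (h₁ : 0 < t₁) (h₂ : 0 < t₂)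
    (hpos : 0 < f t₁) (hf : ∀ t, 0 < t → HasDerivAt f (f' t) t)
    (hf'_nonneg : ∀ t, 0 < t → 0 ≤ f' t) (hf'_le : ∀ t, 0 < t → f' t ≤ t / c * f t) :
    f t₂ / f t₁ ≤ exp (|t₁ ^ 2 - t₂ ^ 2| / (2 * c)) := by
  rw [div_le_iff₀ hpos]
  rcases le_total t₂ t₁ with hle | hle
  · have mono : MonotoneOn f (Icc t₂ t₁) := by
      refine monotoneOn_of_hasDerivWithinAt_nonneg (convex_Icc t₂ t₁)
        (fun t ht => (hf t (h₂.trans_le ht.1)).continuousAt.continuousWithinAt)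
        (fun t ht => (hf t (h₂.trans_le (interior_subset ht).1)).hasDerivWithinAt)
        fun t ht => hf'_nonneg t (h₂.trans_le (interior_subset ht).1)
    calc f t₂ ≤ f t₁ := mono (left_mem_Icc.2 hle) (right_mem_Icc.2 hle) hle
      _ ≤ exp (|t₁ ^ 2 - t₂ ^ 2| / (2 * c)) * f t₁ :=
        le_mul_of_one_le_left hpos.le (one_le_exp (by positivity))
  · rw [abs_sub_comm, abs_of_nonneg (by nlinarith), mul_comm]
    exact le_mul_exp_of_hasDerivAt_le_mul hle (fun t ht => hf t (h₁.trans_le ht.1))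
      fun t ht => hf'_le t (h₁.trans ht.1)

end Gronwall

section Weight

variable {r : ℝ}

lemma one_sub_sq_nonneg_of_mem_Icc {u : ℝ} (hu : u ∈ Icc (-1 : ℝ) 1) : 0 ≤ 1 - u ^ 2 := by
  nlinarith [hu.1, hu.2]

/-- For `r < 0` the factor of `(1 - u) ^ r * (1 + u) ^ r` whose base is at least `1` is at most
`1`, so the weight is dominated by the integrable `(1 - u) ^ r + (1 + u) ^ r`. -/
lemma integrableOn_one_sub_sq_rpow (hr : -1 < r) :
    IntegrableOn (fun u : ℝ => (1 - u ^ 2) ^ r) (Icc (-1) 1) := by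
  rcases le_or_gt 0 r with h0 | h0
  · exact ((continuous_const.sub (continuous_pow 2)).rpow_const
      fun _ => Or.inr h0).continuousOn.integrableOn_Icc
  have hI : IntervalIntegrable (fun u : ℝ => (1 - u) ^ r + (1 + u) ^ r) volume (-1) 1 := by
    have h := intervalIntegral.intervalIntegrable_rpow' (a := 0) (b := 2) hr
    refine .add ?_ ?_
    · simpa [show (1 : ℝ) - 2 = -1 by norm_num] using (h.comp_sub_left 1).symm
    · simpa [show (2 : ℝ) - 1 = 1 by norm_num] using h.comp_add_left 1
  rw [integrableOn_Icc_iff_integrableOn_Ioc]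
  refine ((intervalIntegrable_iff_integrableOn_Ioc_of_le (by norm_num)).1 hI).mono'
    ((measurable_const.sub (measurable_id.pow_const 2)).pow_const r).aestronglyMeasurable
    ((ae_restrict_mem measurableSet_Ioc).mono fun u hu => ?_)
  have h₁ : 0 ≤ 1 - u := by linarith [hu.2]
  have h₂ : 0 ≤ 1 + u := by linarith [hu.1]
  rw [norm_of_nonneg (rpow_nonneg (by nlinarith) r), show 1 - u ^ 2 = (1 - u) * (1 + u) by ring,
    mul_rpow h₁ h₂]
  rcases le_total u 0 with hu0 | hu0
  · have : (1 - u) ^ r ≤ 1 := rpow_le_one_of_one_le_of_nonpos (by linarith) h0.le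
    nlinarith [rpow_nonneg h₁ r, rpow_nonneg h₂ r]
  · have : (1 + u) ^ r ≤ 1 := rpow_le_one_of_one_le_of_nonpos (by linarith) h0.le
    nlinarith [rpow_nonneg h₁ r, rpow_nonneg h₂ r]

lemma integrableOn_mul_one_sub_sq_rpow (hr : -1 < r) {φ : ℝ → ℝ} (hφ : Continuous φ) :
    IntegrableOn (fun u : ℝ => φ u * (1 - u ^ 2) ^ r) (Icc (-1) 1) :=
  (integrableOn_one_sub_sq_rpow hr).continuousOn_mul hφ.continuousOn isCompact_Icc

def expWeightIntegral (r t : ℝ) : ℝ :=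
  ∫ u in Icc (-1 : ℝ) 1, exp (t * u) * (1 - u ^ 2) ^ r

lemma expWeightIntegral_pos (hr : -1 < r) (t : ℝ) : 0 < expWeightIntegral r t := by
  rw [expWeightIntegral, setIntegral_pos_iff_support_of_nonneg_ae]
  · refine lt_of_lt_of_le ?_ (measure_mono (?_ : Ioo (-1 : ℝ) 1 ⊆ _))
    · simp
    · intro u hu
      have : 0 < 1 - u ^ 2 := by nlinarith [hu.1, hu.2]
      exact ⟨(mul_pos (exp_pos _) (rpow_pos_of_pos this r)).ne', Ioo_subset_Icc_self hu⟩
  · exact (ae_restrict_mem measurableSet_Icc).mono fun u hu =>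
      mul_nonneg (exp_pos _).le (rpow_nonneg (one_sub_sq_nonneg_of_mem_Icc hu) r)
  · exact integrableOn_mul_one_sub_sq_rpow hr (by fun_prop)

lemma expWeightIntegral_add_one_le (hr : -1 < r) (t : ℝ) :
    expWeightIntegral (r + 1) t ≤ expWeightIntegral r t := by
  refine setIntegral_mono_on (integrableOn_mul_one_sub_sq_rpow (by linarith) (by fun_prop))
    (integrableOn_mul_one_sub_sq_rpow hr (by fun_prop)) measurableSet_Icc fun u hu => ?_
  have h₀ := one_sub_sq_nonneg_of_mem_Icc hu
  rw [rpow_add_one' h₀ (by linarith)]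
  gcongr
  exact mul_le_of_le_one_right (rpow_nonneg h₀ r) (by nlinarith)

lemma abs_mul_exp_mul_le {t x u : ℝ} (hx : dist x t < 1) (hu : |u| ≤ 1) :
    |u * exp (x * u)| ≤ exp (|t| + 1) := by
  have hxt : |x| ≤ |t| + 1 := by
    have := abs_sub_abs_le_abs_sub x t
    rw [← dist_eq] at this
    linarith
  rw [abs_mul, abs_of_pos (exp_pos _)]
  calc |u| * exp (x * u) ≤ 1 * exp (|t| + 1) := by
        gcongr
        calc x * u ≤ |x| * |u| := by rw [← abs_mul]; exact le_abs_self _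
          _ ≤ |t| + 1 := by nlinarith [abs_nonneg x]
    _ = exp (|t| + 1) := one_mul _

lemma hasDerivAt_expWeightIntegral_integral_mul (hr : -1 < r) (t : ℝ) :
    HasDerivAt (expWeightIntegral r)
      (∫ u in Icc (-1 : ℝ) 1, u * exp (t * u) * (1 - u ^ 2) ^ r) t := by
  have hw : AEStronglyMeasurable (fun u : ℝ => (1 - u ^ 2) ^ r) :=
    ((measurable_const.sub (measurable_id.pow_const 2)).pow_const r).aestronglyMeasurable
  refine (hasDerivAt_integral_of_dominated_loc_of_deriv_le (Metric.ball_mem_nhds t one_pos)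
    (F := fun x u => exp (x * u) * (1 - u ^ 2) ^ r)
    (F' := fun x u => u * exp (x * u) * (1 - u ^ 2) ^ r)
    (bound := fun u => exp (|t| + 1) * (1 - u ^ 2) ^ r) ?_
    (integrableOn_mul_one_sub_sq_rpow hr (by fun_prop)) ?_ ?_
    (integrableOn_mul_one_sub_sq_rpow hr continuous_const) ?_).2
  · exact .of_forall fun x => (by fun_prop : Continuous _).aestronglyMeasurable.mul hw.restrict
  · exact (by fun_prop : Continuous _).aestronglyMeasurable.mul hw.restrict
  · refine (ae_restrict_mem measurableSet_Icc).mono fun u hu x hx => ?_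
    have hw := rpow_nonneg (one_sub_sq_nonneg_of_mem_Icc hu) r
    rw [norm_mul, norm_of_nonneg hw]
    exact mul_le_mul_of_nonneg_right (abs_mul_exp_mul_le hx (abs_le.2 hu)) hw
  · refine .of_forall fun u x _ => ?_
    have := ((hasDerivAt_mul_const (x := x) u).exp).mul_const ((1 - u ^ 2) ^ r)
    rwa [mul_comm (exp (x * u)) u] at this

/-- Integration by parts against `exp (t * u) * (1 - u ^ 2) ^ (r + 1)`, which vanishes at `±1`. -/
lemma integral_mul_exp_mul_one_sub_sq_rpow (hr : -1 < r) (t : ℝ) :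
    2 * (r + 1) * ∫ u in Icc (-1 : ℝ) 1, u * exp (t * u) * (1 - u ^ 2) ^ r =
      t * expWeightIntegral (r + 1) t := by
  have hr₁ : 0 < r + 1 := by linarith
  set Φ : ℝ → ℝ := fun u => exp (t * u) * (1 - u ^ 2) ^ (r + 1)
  set Φ' : ℝ → ℝ := fun u => t * (exp (t * u) * (1 - u ^ 2) ^ (r + 1)) -
    2 * (r + 1) * (u * exp (t * u) * (1 - u ^ 2) ^ r)
  have hΦ' : ∀ u ∈ Ioo (-1 : ℝ) 1, HasDerivAt Φ (Φ' u) u := fun u hu => by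
    have hpos : 0 < 1 - u ^ 2 := by nlinarith [hu.1, hu.2]
    have h₁ : HasDerivAt (fun u => exp (t * u)) (exp (t * u) * t) u := by
      simpa using ((hasDerivAt_id u).const_mul t).exp
    have h₂ : HasDerivAt (fun u => (1 - u ^ 2) ^ (r + 1))
        (-(2 * u) * (r + 1) * (1 - u ^ 2) ^ r) u := by
      simpa using ((hasDerivAt_pow 2 u).const_sub 1).rpow_const (p := r + 1) (Or.inl hpos.ne')
    exact (h₁.mul h₂).congr_deriv (by simp only [Φ']; ring)
  have hΦ_cont : ContinuousOn Φ (Icc (-1) 1) :=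
    (by fun_prop : Continuous fun u => exp (t * u)).continuousOn.mul
      ((continuous_const.sub (continuous_pow 2)).rpow_const fun _ => Or.inr hr₁.le).continuousOn
  have hint₁ : IntegrableOn (fun u => exp (t * u) * (1 - u ^ 2) ^ (r + 1)) (Icc (-1) 1) :=
    integrableOn_mul_one_sub_sq_rpow (by linarith) (by fun_prop)
  have hint₂ : IntegrableOn (fun u => u * exp (t * u) * (1 - u ^ 2) ^ r) (Icc (-1) 1) :=
    integrableOn_mul_one_sub_sq_rpow hr (by fun_prop)
  have hftc := intervalIntegral.integral_eq_sub_of_hasDerivAt_of_le (by norm_num) hΦ_cont hΦ'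
    ((intervalIntegrable_iff_integrableOn_Icc_of_le (by norm_num)).2
      ((hint₁.const_mul t).sub (hint₂.const_mul (2 * (r + 1)))))
  rw [intervalIntegral.integral_of_le (by norm_num), ← integral_Icc_eq_integral_Ioc,
    integral_sub (hint₁.const_mul t) (hint₂.const_mul _), integral_const_mul,
    integral_const_mul] at hftc
  simp [Φ, zero_rpow hr₁.ne'] at hftc
  rw [expWeightIntegral]
  linarith

lemma hasDerivAt_expWeightIntegral (hr : -1 < r) (t : ℝ) :
    HasDerivAt (expWeightIntegral r) (t / (2 * (r + 1)) * expWeightIntegral (r + 1) t) t := by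
  have h := integral_mul_exp_mul_one_sub_sq_rpow hr t
  refine (hasDerivAt_expWeightIntegral_integral_mul hr t).congr_deriv ?_
  rw [div_mul_eq_mul_div, eq_div_iff (by linarith), mul_comm, h]

end Weight

/-- For an integer `q ≥ 1` and any `t₁ > 0`, `t₂ > 0`,
`G_q(t₂)/G_q(t₁) ≤ exp(|t₁² − t₂²|/(2q))`. -/
theorem stmt17 (q : ℕ) (hq : 1 ≤ q) (t₁ t₂ : ℝ) (h₁ : 0 < t₁) (h₂ : 0 < t₂) :
    Gq q t₂ / Gq q t₁ ≤ Real.exp (|t₁ ^ 2 - t₂ ^ 2| / (2 * q)) := by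
  set r : ℝ := ((q : ℝ) - 2) / 2
  have hr : -1 < r := by
    have : (1 : ℝ) ≤ q := by exact_mod_cast hq
    simp only [r]; linarith
  have hGq : Gq q = expWeightIntegral r := rfl
  have hc : 2 * (r + 1) = q := by simp only [r]; ring
  rw [hGq]
  refine div_le_exp_abs_sq_sub_of_hasDerivAt (Nat.cast_nonneg q) h₁ h₂
    (expWeightIntegral_pos hr t₁) (fun t _ => hc ▸ hasDerivAt_expWeightIntegral hr t)
    (fun t ht => ?_) fun t ht => ?_
  · exact mul_nonneg (by positivity) (expWeightIntegral_pos (by linarith) t).le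
  · exact mul_le_mul_of_nonneg_left (expWeightIntegral_add_one_le hr t) (by positivity)
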